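/- Let M = H₁ × ⋯ × H_k be a direct product of groups acting on V = W₁ ⊕ ⋯ ⊕ W_k, where each W_i is a nontrivial irreducible F[H_i]-module on which H_i acts primitively, and H_j acts trivially on W_i for j ≠ i. If V = Q₁ ⊕ ⋯ ⊕ Q_ℓ is a decomposition into nonzero subspaces such that M permutes the set {Q₁,…,Q_ℓ}, then ℓ ≤ k. -/

import Mathlib

/-!
Let `M` permute the indices of the `Q t`. For an `M`-orbit `O` the sum `V_O` of the `Q t`,
`t ∈ O`, is `M`-invariant. An `H i`-invariant subspace `U` either projects to zero in `W i` or
contains `W i`: its projection is `H i`-invariant, and if that is all of `W i`, then `U` contains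
every `g w - w` (`g ∈ H i`, `w ∈ W i`), and these span `W i`. Hence `V_O` is the sum of the `W i`,
`i ∈ I(O)`, that it contains, and distinct orbits have disjoint `I(O)`. It remains to show
`|O| ≤ |I(O)|`.

For `i ∈ I(O)` the group `H i` is transitive on `O`: each `H i`-orbit spans a subspace
containing `W i`, and distinct `H i`-orbits span disjoint subspaces. As `H i` fixes
`⨁_{j ≠ i} W j` pointwise, each `Q t` then meets it trivially when `|O| ≥ 2`. If
`I(O) = {i}`, then `V_O = W i` and the `Q t` form a system of imprimitivity for `H i`. Otherwise
the projection to `W i` maps each `Q t` isomorphically onto `W i`, the stabiliser of `t` in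
`H i` acts trivially on `W i` (so `W i` is finite-dimensional), and comparing dimensions in
`⨁_{t ∈ O} Q t = V_O = ⨁_{i ∈ I(O)} W i` gives `|O| = |I(O)|`.
-/

open Function Module

namespace DirectSum.IsInternal

variable {R M ι : Type*} [Ring R] [AddCommGroup M] [Module R M] [DecidableEq ι]
  {A : ι → Submodule R M} (h : IsInternal A)

noncomputable def proj (i : ι) : M →ₗ[R] M :=
  (A i).subtype ∘ₗ component R ι (fun i ↦ A i) i ∘ₗ
    (LinearEquiv.ofBijective (coeLinearMap A) h).symm.toLinearMap

theorem proj_mem (i : ι) (v : M) : h.proj i v ∈ A i :=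
  Subtype.prop _

theorem proj_apply_of_mem {i : ι} {v : M} (hv : v ∈ A i) : h.proj i v = v := by
  simp [proj, ← apply_eq_component, h.ofBijective_coeLinearMap_of_mem hv]

theorem proj_apply_of_mem_ne {i j : ι} (hij : i ≠ j) {v : M} (hv : v ∈ A i) :
    h.proj j v = 0 := by
  simp [proj, ← apply_eq_component, h.ofBijective_coeLinearMap_of_mem_ne hij hv]

theorem proj_proj (i : ι) (v : M) : h.proj i (h.proj i v) = h.proj i v :=
  h.proj_apply_of_mem (h.proj_mem i v)

theorem sum_proj [Fintype ι] (v : M) : ∑ i, h.proj i v = v := by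
  set e := LinearEquiv.ofBijective (coeLinearMap A) h
  conv_rhs => rw [← e.apply_symm_apply v, ← DirectSum.sum_univ_of (e.symm v), map_sum]
  exact Finset.sum_congr rfl fun i _ ↦ (coeLinearMap_of A i _).symm

theorem ext_proj [Fintype ι] {v w : M} (hvw : ∀ i, h.proj i v = h.proj i w) : v = w := by
  rw [← h.sum_proj v, ← h.sum_proj w]
  exact Finset.sum_congr rfl fun i _ ↦ hvw i

theorem mem_biSup_iff [Fintype ι] {s : Set ι} {v : M} :
    v ∈ ⨆ i ∈ s, A i ↔ ∀ i ∉ s, h.proj i v = 0 := by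
  constructor
  · intro hv i hi
    refine Submodule.iSup_induction _ (motive := fun v ↦ h.proj i v = 0) hv (fun j x hx ↦ ?_)
      (map_zero _) (fun x y hx hy ↦ by rw [map_add, hx, hy, add_zero])
    by_cases hj : j ∈ s
    · rw [iSup_pos hj] at hx
      exact h.proj_apply_of_mem_ne (by rintro rfl; exact hi hj) hx
    · rw [iSup_neg hj, Submodule.mem_bot] at hx
      rw [hx, map_zero]
  · intro hv
    rw [← h.sum_proj v]
    refine Submodule.sum_mem _ fun i _ ↦ ?_
    by_cases hi : i ∈ s
    · exact Submodule.mem_iSup_of_mem i (Submodule.mem_iSup_of_mem hi (h.proj_mem i v))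
    · rw [hv i hi]
      exact zero_mem _

end DirectSum.IsInternal

theorem iSupIndep.finrank_biSup {F V ι : Type*} [DivisionRing F] [AddCommGroup V] [Module F V]
    {A : ι → Submodule F V} (hA : iSupIndep A) {s : Set ι} (hs : s.Finite)
    (hfd : ∀ i ∈ s, FiniteDimensional F (A i)) {d : ℕ}
    (hd : ∀ i ∈ s, finrank F (A i) = d) :
    finrank F ↥(⨆ i ∈ s, A i) = s.ncard * d := by
  induction s, hs using Set.Finite.induction_on with
  | empty => rw [iSup_emptyset, finrank_bot, Set.ncard_empty, zero_mul]
  | @insert a s ha hs ih =>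
    have := hfd a (Set.mem_insert a s)
    have : FiniteDimensional F ↥(⨆ i ∈ s, A i) := by
      have := hs.to_subtype
      have : ∀ i : s, FiniteDimensional F (A i) := fun i ↦ hfd i (Set.mem_insert_of_mem a i.2)
      rw [iSup_subtype']
      infer_instance
    have hsup := Submodule.finrank_sup_add_finrank_inf_eq (A a) (⨆ i ∈ s, A i)
    rw [(hA.disjoint_biSup ha).eq_bot, finrank_bot, add_zero] at hsup
    rw [iSup_insert, hsup, hd a (Set.mem_insert a s),
      ih (fun i hi ↦ hfd i (Set.mem_insert_of_mem a hi))
        (fun i hi ↦ hd i (Set.mem_insert_of_mem a hi)),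
      Set.ncard_insert_of_notMem ha hs]
    ring

theorem MulAction.card_le_card_of_ncard_orbit_le {G α β : Type*} [Group G] [MulAction G α]
    [Finite α] [Finite β] (f : Set α → Set β)
    (hdisj : ∀ a b, b ∉ orbit G a → Disjoint (f (orbit G a)) (f (orbit G b)))
    (hcard : ∀ a, (orbit G a).ncard ≤ (f (orbit G a)).ncard) : Nat.card α ≤ Nat.card β := by
  classical
  have := Fintype.ofFinite α
  have := Fintype.ofFinite β
  let g : α → Finset β := fun a ↦ (f (orbit G a)).toFinset
  have hfiber : ∀ a b, g b = g a → b ∈ orbit G a := by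
    intro a b hab
    by_contra hb
    have hempty : f (orbit G a) = ∅ := by
      simpa [g, Set.toFinset_inj.1 hab] using hdisj a b hb
    have := hcard a
    rw [hempty, Set.ncard_empty, Nat.le_zero, Set.ncard_eq_zero] at this
    exact Set.eq_empty_iff_forall_notMem.1 this a (mem_orbit_self a)
  calc Nat.card α = (Finset.univ : Finset α).card := by simp
    _ = ∑ s ∈ Finset.univ.image g, (Finset.univ.filter (g · = s)).card :=
      Finset.card_eq_sum_card_fiberwise fun a _ ↦ Finset.mem_image_of_mem g (Finset.mem_univ a)
    _ ≤ ∑ s ∈ Finset.univ.image g, s.card := by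
      refine Finset.sum_le_sum fun s hs ↦ ?_
      obtain ⟨a, -, rfl⟩ := Finset.mem_image.1 hs
      calc (Finset.univ.filter (g · = g a)).card ≤ (orbit G a).toFinset.card :=
            Finset.card_le_card fun b hb ↦ by simpa using hfiber a b (by simpa using hb)
        _ ≤ (g a).card := by simpa [g, Set.ncard_eq_toFinset_card'] using hcard a
    _ = ((Finset.univ.image g).biUnion id).card := by
      refine (Finset.card_biUnion fun s hs s' hs' hss' ↦ ?_).symm
      obtain ⟨a, -, rfl⟩ := Finset.mem_image.1 hs
      obtain ⟨b, -, rfl⟩ := Finset.mem_image.1 hs'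
      have hb : b ∉ orbit G a := fun hb ↦ hss' (by simp [g, orbit_eq_iff.2 hb])
      simpa [g] using hdisj a b hb
    _ ≤ Nat.card β := by simpa using Finset.card_le_univ _

namespace Representation

section Group

variable {F V G : Type*} [Field F] [AddCommGroup V] [Module F V] [Group G]
  (σ : Representation F G V) {W : Submodule F V}

theorem iSup_map_sub_one_eq (hinv : ∀ g, W.map (σ g) ≤ W)
    (hirr : ∀ U ≤ W, (∀ g, U.map (σ g) ≤ U) → U = ⊥ ∨ U = W)
    (hnontriv : ∃ g, ∃ v ∈ W, σ g v ≠ v) :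
    ⨆ g, W.map (σ g - 1) = W := by
  have hmem : ∀ g, ∀ w ∈ W, σ g w - w ∈ ⨆ g, W.map (σ g - 1) := fun g w hw ↦
    Submodule.mem_iSup_of_mem g ⟨w, hw, rfl⟩
  refine (hirr _ (iSup_le fun g ↦ ?_) fun h ↦ ?_).resolve_left fun hbot ↦ ?_
  · rintro _ ⟨w, hw, rfl⟩
    exact W.sub_mem (hinv g ⟨w, hw, rfl⟩) hw
  · rw [Submodule.map_iSup]
    refine iSup_le fun g ↦ ?_
    rintro _ ⟨_, ⟨w, hw, rfl⟩, rfl⟩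
    have : σ h ((σ g - 1) w) = (σ (h * g) w - w) - (σ h w - w) := by
      simp only [LinearMap.sub_apply, Module.End.one_apply, map_sub, map_mul,
        Module.End.mul_apply]
      abel
    rw [this]
    exact Submodule.sub_mem _ (hmem _ w hw) (hmem h w hw)
  · obtain ⟨g, v, hv, hne⟩ := hnontriv
    have := hmem g v hv
    rw [hbot, Submodule.mem_bot, sub_eq_zero] at this
    exact hne this

theorem finiteDimensional_of_factorsThrough {X : Type*} [Finite X]
    (hinv : ∀ g, W.map (σ g) ≤ W)
    (hirr : ∀ U ≤ W, (∀ g, U.map (σ g) ≤ U) → U = ⊥ ∨ U = W)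
    (ψ : G → X) (hψ : ∀ g g', ψ g = ψ g' → ∀ w ∈ W, σ g w = σ g' w) :
    FiniteDimensional F W := by
  rcases eq_or_ne W ⊥ with rfl | hW
  · infer_instance
  obtain ⟨w, hw, hw0⟩ := Submodule.exists_mem_ne_zero_of_ne_bot hW
  have hspan : Submodule.span F (Set.range fun g ↦ σ g w) = W := by
    refine (hirr _ ?_ fun g ↦ ?_).resolve_left fun hbot ↦ hw0 ?_
    · rw [Submodule.span_le]
      rintro _ ⟨g, rfl⟩
      exact hinv g ⟨w, hw, rfl⟩
    · rw [Submodule.map_span]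
      refine Submodule.span_mono ?_
      rintro _ ⟨_, ⟨g', rfl⟩, rfl⟩
      exact ⟨g * g', by simp⟩
    · simpa [hbot] using
        Submodule.subset_span (R := F) (s := Set.range fun g ↦ σ g w) ⟨1, by simp⟩
  have hfin : (Set.range fun g ↦ σ g w).Finite := by
    refine (Set.finite_range (extend ψ (fun g ↦ σ g w) 0)).subset ?_
    rintro _ ⟨g, rfl⟩
    exact ⟨ψ g, FactorsThrough.extend_apply (fun g g' h ↦ hψ g g' h w hw) _ g⟩
  rw [← hspan]
  exact FiniteDimensional.span_of_finite F hfin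

def IsImprimitive (U : Submodule F V) : Prop :=
  ∃ (m : ℕ) (P : Fin m → Submodule F V), 1 < m ∧ (∀ t, P t ≠ ⊥) ∧ iSupIndep P ∧
    (⨆ t, P t) = U ∧ (∀ g : G, ∀ t, (P t).map (σ g) ∈ Set.range P)

theorem isImprimitive_of_finite {X : Type*} [Finite X] (hX : 1 < Nat.card X)
    (P : X → Submodule F V) (hne : ∀ x, P x ≠ ⊥) (hind : iSupIndep P)
    (hsup : ⨆ x, P x = W)
    (hperm : ∀ g x, (P x).map (σ g) ∈ Set.range P) : σ.IsImprimitive W := by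
  let e := Finite.equivFin X
  refine ⟨Nat.card X, P ∘ e.symm, hX, fun t ↦ hne _, hind.comp e.symm.injective,
    by rw [← hsup]; exact e.symm.iSup_comp (g := P), fun g t ↦ ?_⟩
  obtain ⟨x, hx⟩ := hperm g (e.symm t)
  exact ⟨e x, by simpa using hx⟩

variable {σ} {κ : Type*} [MulAction G κ] {Q : κ → Submodule F V}

theorem map_biSup_le_of_mapsTo (hQ : ∀ m t, Q (m • t) = (Q t).map (σ m)) {m : G} {S : Set κ}
    (hS : Set.MapsTo (m • ·) S S) : (⨆ u ∈ S, Q u).map (σ m) ≤ ⨆ u ∈ S, Q u := by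
  simp only [Submodule.map_iSup]
  exact iSup₂_le fun u hu ↦ hQ m u ▸ le_biSup Q (hS hu)

theorem map_biSup_orbit_le (hQ : ∀ m t, Q (m • t) = (Q t).map (σ m)) (m : G) (t : κ) :
    (⨆ u ∈ MulAction.orbit G t, Q u).map (σ m) ≤ ⨆ u ∈ MulAction.orbit G t, Q u :=
  map_biSup_le_of_mapsTo hQ fun _ ↦ MulAction.mem_orbit_of_mem_orbit m

end Group

noncomputable abbrev indexMulAction {F V G κ : Type*} [Field F] [AddCommGroup V] [Module F V]
    [Monoid G] (σ : Representation F G V) {Q : κ → Submodule F V} (hQ : Injective Q)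
    (hperm : ∀ m t, (Q t).map (σ m) ∈ Set.range Q) : MulAction G κ where
  smul m t := (hperm m t).choose
  one_smul t := hQ <| (hperm 1 t).choose_spec.trans <| by
    rw [map_one, Module.End.one_eq_id, Submodule.map_id]
  mul_smul m n t := hQ <| by
    change Q (hperm (m * n) t).choose = Q (hperm m (hperm n t).choose).choose
    rw [(hperm _ _).choose_spec, (hperm _ _).choose_spec, (hperm n t).choose_spec, map_mul,
      Module.End.mul_eq_comp, Submodule.map_comp]

variable {F V ι : Type*} [Field F] [AddCommGroup V] [Module F V] [DecidableEq ι]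
  {H : ι → Type*} [∀ i, Group (H i)]

structure IsProductDecomposition (ρ : Representation F (∀ i, H i) V)
    (W : ι → Submodule F V) : Prop where
  isInternal : DirectSum.IsInternal W
  map_le : ∀ i (g : H i), (W i).map (ρ (Pi.mulSingle i g)) ≤ W i
  apply_eq_self_of_ne : ∀ i j, j ≠ i → ∀ g : H j, ∀ v ∈ W i, ρ (Pi.mulSingle j g) v = v

structure IsIrreducibleProductDecomposition (ρ : Representation F (∀ i, H i) V)
    (W : ι → Submodule F V) : Prop extends IsProductDecomposition ρ W where
  eq_bot_or_eq : ∀ i (U : Submodule F V), U ≤ W i →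
    (∀ g : H i, U.map (ρ (Pi.mulSingle i g)) ≤ U) → U = ⊥ ∨ U = W i
  exists_apply_ne : ∀ i, ∃ g : H i, ∃ v ∈ W i, ρ (Pi.mulSingle i g) v ≠ v

variable {ρ : Representation F (∀ i, H i) V} {W : ι → Submodule F V}

namespace IsProductDecomposition

variable [Fintype ι]

theorem apply_of_mem (hW : IsProductDecomposition ρ W) (m : ∀ i, H i) {i : ι} {v : V}
    (hv : v ∈ W i) : ρ m v = ρ (Pi.mulSingle i (m i)) v := by
  let S : Submonoid (∀ i, H i) :=
    { carrier := {m | ∀ i, ∀ v ∈ W i, ρ m v = ρ (Pi.mulSingle i (m i)) v}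
      one_mem' := by simp
      mul_mem' := fun {m n} hm hn i v hv ↦ by
        rw [map_mul, Module.End.mul_apply, hn i v hv,
          hm i _ (hW.map_le i (n i) ⟨v, hv, rfl⟩), ← Module.End.mul_apply, ← map_mul,
          ← Pi.mulSingle_mul, Pi.mul_apply] }
  suffices (⊤ : Submonoid (∀ i, H i)) ≤ S from this (Submonoid.mem_top m) i v hv
  rw [← Submonoid.pi_top Set.univ, ← Submonoid.iSup_map_mulSingle]
  refine iSup_le fun j ↦ ?_
  rintro _ ⟨g, -, rfl⟩ i v hv
  rcases eq_or_ne j i with rfl | hji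
  · simp
  · simp [Pi.mulSingle_eq_of_ne' hji, hW.apply_eq_self_of_ne i j hji g v hv]

theorem map_eq (hW : IsProductDecomposition ρ W) (m : ∀ i, H i) (i : ι) :
    (W i).map (ρ m) = W i := by
  have hle : ∀ m : ∀ i, H i, (W i).map (ρ m) ≤ W i := by
    rintro m _ ⟨v, hv, rfl⟩
    rw [hW.apply_of_mem m hv]
    exact hW.map_le i (m i) ⟨v, hv, rfl⟩
  refine (hle m).antisymm fun v hv ↦ ⟨ρ m⁻¹ v, hle m⁻¹ ⟨v, hv, rfl⟩, ?_⟩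
  rw [← Module.End.mul_apply, ← map_mul, mul_inv_cancel, map_one, Module.End.one_apply]

theorem proj_apply (hW : IsProductDecomposition ρ W) (m : ∀ i, H i) (i : ι) (v : V) :
    hW.isInternal.proj i (ρ m v) = ρ (Pi.mulSingle i (m i)) (hW.isInternal.proj i v) := by
  have hv : v ∈ ⨆ j, W j := hW.isInternal.submodule_iSup_eq_top ▸ Submodule.mem_top
  refine Submodule.iSup_induction _ (motive := fun v ↦ hW.isInternal.proj i (ρ m v) =
    ρ (Pi.mulSingle i (m i)) (hW.isInternal.proj i v)) hv (fun j w hw ↦ ?_) (by simp)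
    (fun x y hx hy ↦ by simp only [map_add, hx, hy])
  have hmw : ρ m w ∈ W j := hW.map_eq m j ▸ ⟨w, hw, rfl⟩
  rcases eq_or_ne j i with rfl | hji
  · rw [hW.isInternal.proj_apply_of_mem hmw, hW.isInternal.proj_apply_of_mem hw,
      hW.apply_of_mem m hw]
  · rw [hW.isInternal.proj_apply_of_mem_ne hji hmw, hW.isInternal.proj_apply_of_mem_ne hji hw,
      map_zero]

theorem map_proj_map (hW : IsProductDecomposition ρ W) (m : ∀ i, H i) (i : ι)
    (U : Submodule F V) :
    (U.map (ρ m)).map (hW.isInternal.proj i) =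
      (U.map (hW.isInternal.proj i)).map (ρ (Pi.mulSingle i (m i))) := by
  rw [← Submodule.map_comp, ← Submodule.map_comp]
  exact congrArg (U.map ·) (LinearMap.ext (hW.proj_apply m i))

theorem apply_mulSingle_of_proj_eq_zero (hW : IsProductDecomposition ρ W) {i : ι} {v : V}
    (hv : hW.isInternal.proj i v = 0) (g : H i) : ρ (Pi.mulSingle i g) v = v := by
  refine hW.isInternal.ext_proj fun j ↦ ?_
  rw [hW.proj_apply]
  rcases eq_or_ne j i with rfl | hji
  · rw [hv, map_zero]
  · rw [Pi.mulSingle_eq_of_ne hji, Pi.mulSingle_one, map_one, Module.End.one_apply]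

theorem apply_mulSingle_proj_sub (hW : IsProductDecomposition ρ W) (i : ι) (g : H i) (v : V) :
    ρ (Pi.mulSingle i g) (hW.isInternal.proj i v) - hW.isInternal.proj i v =
      ρ (Pi.mulSingle i g) v - v := by
  have := hW.apply_mulSingle_of_proj_eq_zero (v := v - hW.isInternal.proj i v)
    (by rw [map_sub, hW.isInternal.proj_proj, sub_self]) g
  rw [map_sub, sub_eq_sub_iff_sub_eq_sub] at this
  rw [this]

end IsProductDecomposition

namespace IsIrreducibleProductDecomposition

open MulAction

theorem ne_bot (hW : IsIrreducibleProductDecomposition ρ W) (i : ι) : W i ≠ ⊥ := by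
  rintro hbot
  obtain ⟨g, v, hv, hne⟩ := hW.exists_apply_ne i
  rw [hbot, Submodule.mem_bot] at hv
  simp [hv] at hne

variable [Fintype ι]

theorem map_proj_eq_bot_or_le (hW : IsIrreducibleProductDecomposition ρ W) {i : ι}
    {U : Submodule F V} (hU : ∀ g : H i, U.map (ρ (Pi.mulSingle i g)) ≤ U) :
    U.map (hW.isInternal.proj i) = ⊥ ∨ W i ≤ U := by
  set π := hW.isInternal.proj i
  refine (hW.eq_bot_or_eq i _ ?_ fun g ↦ ?_).imp_right fun hπU ↦ ?_
  · rintro _ ⟨v, -, rfl⟩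
    exact hW.isInternal.proj_mem i v
  · have h := hW.map_proj_map (Pi.mulSingle i g) i U
    rw [Pi.mulSingle_eq_same] at h
    exact h ▸ Submodule.map_mono (hU g)
  · rw [← iSup_map_sub_one_eq (ρ.comp (MonoidHom.mulSingle H i)) (hW.map_le i)
      (hW.eq_bot_or_eq i) (hW.exists_apply_ne i)]
    refine iSup_le fun g ↦ ?_
    rintro _ ⟨w, hw, rfl⟩
    obtain ⟨u, hu, rfl⟩ : w ∈ U.map π := hπU ▸ hw
    have := hW.apply_mulSingle_proj_sub i g u
    simp only [LinearMap.sub_apply, Module.End.one_apply]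
    exact this ▸ U.sub_mem (hU g ⟨u, hu, rfl⟩) hu

theorem eq_biSup_of_forall_map_le (hW : IsIrreducibleProductDecomposition ρ W)
    {U : Submodule F V} (hU : ∀ i (g : H i), U.map (ρ (Pi.mulSingle i g)) ≤ U) :
    U = ⨆ i ∈ {i | W i ≤ U}, W i := by
  refine le_antisymm (fun v hv ↦ hW.isInternal.mem_biSup_iff.2 fun i hi ↦ ?_)
    (iSup₂_le fun _ ↦ id)
  have := (hW.map_proj_eq_bot_or_le (hU i)).resolve_right hi ▸ Submodule.mem_map_of_mem hv
  exact (Submodule.mem_bot F).1 this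

variable {κ : Type*} [MulAction (∀ i, H i) κ] {Q : κ → Submodule F V}

theorem map_proj_ne_bot (hW : IsIrreducibleProductDecomposition ρ W)
    (hQ : ∀ m t, Q (m • t) = (Q t).map (ρ m)) {i : ι} {t : κ}
    (hi : W i ≤ ⨆ u ∈ orbit (∀ i, H i) t, Q u) :
    (Q t).map (hW.isInternal.proj i) ≠ ⊥ := by
  intro hbot
  have : (⨆ u ∈ orbit (∀ i, H i) t, Q u).map (hW.isInternal.proj i) = ⊥ := by
    simp only [Submodule.map_iSup, iSup_eq_bot]
    rintro _ ⟨m, rfl⟩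
    rw [hQ, hW.map_proj_map, hbot, Submodule.map_bot]
  refine hW.ne_bot i (eq_bot_iff.2 fun w hw ↦ ?_)
  rw [← hW.isInternal.proj_apply_of_mem hw, ← this]
  exact Submodule.mem_map_of_mem (hi hw)

theorem exists_mulSingle_smul_eq (hW : IsIrreducibleProductDecomposition ρ W)
    (hQ : ∀ m t, Q (m • t) = (Q t).map (ρ m)) (hQind : iSupIndep Q) {j : ι} {t u : κ}
    (hj : W j ≤ ⨆ u ∈ orbit (∀ i, H i) t, Q u) (hu : u ∈ orbit (∀ i, H i) t) :
    ∃ g : H j, Pi.mulSingle j g • t = u := by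
  set B : κ → Set κ := fun x ↦ Set.range fun g : H j ↦ Pi.mulSingle j g • x
  have hWB : ∀ x ∈ orbit (∀ i, H i) t, W j ≤ ⨆ y ∈ B x, Q y := by
    intro x hx
    refine (hW.map_proj_eq_bot_or_le fun g ↦ map_biSup_le_of_mapsTo hQ ?_).resolve_left
      fun hbot ↦ hW.map_proj_ne_bot hQ (orbit_eq_iff.2 hx ▸ hj) (eq_bot_iff.2 ?_)
    · rintro _ ⟨g', rfl⟩
      exact ⟨g * g', by simp only [Pi.mulSingle_mul, mul_smul]⟩
    · rw [← hbot]
      exact Submodule.map_mono (le_biSup Q ⟨1, by simp⟩)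
  by_contra! hne
  have hdisj : Disjoint (B t) (B u) := by
    refine Set.disjoint_left.2 ?_
    rintro _ ⟨g₁, rfl⟩ ⟨g₂, h⟩
    refine hne (g₂⁻¹ * g₁) ?_
    simp only at h
    rw [Pi.mulSingle_mul, mul_smul, ← h, ← mul_smul, ← Pi.mulSingle_mul, inv_mul_cancel,
      Pi.mulSingle_one, one_smul]
  exact hW.ne_bot j (le_bot_iff.1
    (hQind.disjoint_biSup_biSup hdisj (hWB t (mem_orbit_self t)) (hWB u hu)))

theorem disjoint_ker_proj (hW : IsIrreducibleProductDecomposition ρ W)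
    (hQ : ∀ m t, Q (m • t) = (Q t).map (ρ m)) (hQind : iSupIndep Q) {i : ι} {t : κ}
    (hO : 1 < (orbit (∀ i, H i) t).ncard) (hi : W i ≤ ⨆ u ∈ orbit (∀ i, H i) t, Q u) :
    Disjoint (Q t) (LinearMap.ker (hW.isInternal.proj i)) := by
  obtain ⟨u, hu, hut⟩ := Set.exists_ne_of_one_lt_ncard hO t
  obtain ⟨g, rfl⟩ := hW.exists_mulSingle_smul_eq hQ hQind hi hu
  refine Submodule.disjoint_def.2 fun v hvQ hvker ↦ ?_
  have hv : v ∈ Q (Pi.mulSingle i g • t) := by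
    rw [hQ, ← hW.apply_mulSingle_of_proj_eq_zero hvker g]
    exact Submodule.mem_map_of_mem hvQ
  exact Submodule.disjoint_def.1 (hQind.pairwiseDisjoint hut.symm) v hvQ hv

theorem map_proj_eq (hW : IsIrreducibleProductDecomposition ρ W)
    (hQ : ∀ m t, Q (m • t) = (Q t).map (ρ m)) (hQind : iSupIndep Q) {i j : ι} (hij : i ≠ j)
    {t : κ} (hi : W i ≤ ⨆ u ∈ orbit (∀ i, H i) t, Q u)
    (hj : W j ≤ ⨆ u ∈ orbit (∀ i, H i) t, Q u) :
    (Q t).map (hW.isInternal.proj i) = W i := by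
  have hconst : ∀ u ∈ orbit (∀ i, H i) t,
      (Q u).map (hW.isInternal.proj i) = (Q t).map (hW.isInternal.proj i) := by
    intro u hu
    obtain ⟨g, rfl⟩ := hW.exists_mulSingle_smul_eq hQ hQind hj hu
    rw [hQ, hW.map_proj_map, Pi.mulSingle_eq_of_ne hij, Pi.mulSingle_one, map_one,
      Module.End.one_eq_id, Submodule.map_id]
  refine le_antisymm (Submodule.map_le_iff_le_comap.2 fun v _ ↦ hW.isInternal.proj_mem i v)
    fun w hw ↦ ?_
  have : w ∈ (⨆ u ∈ orbit (∀ i, H i) t, Q u).map (hW.isInternal.proj i) :=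
    hW.isInternal.proj_apply_of_mem hw ▸ Submodule.mem_map_of_mem (hi hw)
  simp only [Submodule.map_iSup] at this
  exact iSup₂_le (fun u hu ↦ (hconst u hu).le) this

theorem disjoint_of_ne (hW : IsIrreducibleProductDecomposition ρ W)
    (hQ : ∀ m t, Q (m • t) = (Q t).map (ρ m)) (hQind : iSupIndep Q) {i j : ι} (hij : i ≠ j)
    {t : κ} (hO : 1 < (orbit (∀ i, H i) t).ncard)
    (hj : W j ≤ ⨆ u ∈ orbit (∀ i, H i) t, Q u) :
    Disjoint (W i) (Q t) :=
  (hW.disjoint_ker_proj hQ hQind hO hj).symm.mono_left fun _ hw ↦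
    hW.isInternal.proj_apply_of_mem_ne hij hw

theorem apply_eq_self_of_smul_eq (hW : IsIrreducibleProductDecomposition ρ W)
    (hQ : ∀ m t, Q (m • t) = (Q t).map (ρ m)) (hQind : iSupIndep Q) {i j : ι} (hij : i ≠ j)
    {t : κ} (hO : 1 < (orbit (∀ i, H i) t).ncard)
    (hi : W i ≤ ⨆ u ∈ orbit (∀ i, H i) t, Q u)
    (hj : W j ≤ ⨆ u ∈ orbit (∀ i, H i) t, Q u) {g : H i} (hg : Pi.mulSingle i g • t = t)
    {w : V} (hw : w ∈ W i) : ρ (Pi.mulSingle i g) w = w := by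
  rw [← hW.map_proj_eq hQ hQind hij hi hj] at hw
  obtain ⟨q, hq, rfl⟩ := hw
  have hgq : ρ (Pi.mulSingle i g) q ∈ Q t := hg ▸ hQ _ t ▸ Submodule.mem_map_of_mem hq
  -- `g • q - q` lies in `W i ⊓ Q t = ⊥`.
  have hfix : ρ (Pi.mulSingle i g) q = q := by
    rw [← sub_eq_zero]
    refine Submodule.disjoint_def.1 (hW.disjoint_of_ne hQ hQind hij hO hj) _ ?_
      ((Q t).sub_mem hgq hq)
    rw [← hW.apply_mulSingle_proj_sub]
    exact (W i).sub_mem (hW.map_le i g ⟨_, hW.isInternal.proj_mem i q, rfl⟩)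
      (hW.isInternal.proj_mem i q)
  have := hW.proj_apply (Pi.mulSingle i g) i q
  rw [Pi.mulSingle_eq_same, hfix] at this
  exact this.symm

theorem finiteDimensional (hW : IsIrreducibleProductDecomposition ρ W)
    (hQ : ∀ m t, Q (m • t) = (Q t).map (ρ m)) (hQind : iSupIndep Q) {i j : ι} (hij : i ≠ j)
    {t : κ} (hO : 1 < (orbit (∀ i, H i) t).ncard)
    (hi : W i ≤ ⨆ u ∈ orbit (∀ i, H i) t, Q u)
    (hj : W j ≤ ⨆ u ∈ orbit (∀ i, H i) t, Q u) : FiniteDimensional F (W i) := by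
  have := (Set.finite_of_ncard_pos (zero_lt_one.trans hO)).to_subtype
  refine finiteDimensional_of_factorsThrough (ρ.comp (MonoidHom.mulSingle H i)) (hW.map_le i)
    (hW.eq_bot_or_eq i) (X := orbit (∀ i, H i) t)
    (fun g ↦ ⟨Pi.mulSingle i g • t, mem_orbit t _⟩)
    fun g g' hgg' w hw ↦ ?_
  have hfix : Pi.mulSingle i (g'⁻¹ * g) • t = t := by
    rw [Pi.mulSingle_mul, mul_smul, show Pi.mulSingle i g • t = _ from Subtype.ext_iff.1 hgg',
      ← mul_smul, ← Pi.mulSingle_mul, inv_mul_cancel, Pi.mulSingle_one, one_smul]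
  calc ρ (Pi.mulSingle i g) w = ρ (Pi.mulSingle i g') (ρ (Pi.mulSingle i (g'⁻¹ * g)) w) := by
        rw [← Module.End.mul_apply, ← map_mul, ← Pi.mulSingle_mul, mul_inv_cancel_left]
    _ = ρ (Pi.mulSingle i g') w := by
        rw [hW.apply_eq_self_of_smul_eq hQ hQind hij hO hi hj hfix hw]

theorem nonempty_linearEquiv (hW : IsIrreducibleProductDecomposition ρ W)
    (hQ : ∀ m t, Q (m • t) = (Q t).map (ρ m)) (hQind : iSupIndep Q) {i j : ι} (hij : i ≠ j)
    {t : κ} (hO : 1 < (orbit (∀ i, H i) t).ncard)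
    (hi : W i ≤ ⨆ u ∈ orbit (∀ i, H i) t, Q u)
    (hj : W j ≤ ⨆ u ∈ orbit (∀ i, H i) t, Q u) : Nonempty (Q t ≃ₗ[F] W i) := by
  let π := (hW.isInternal.proj i).domRestrict (Q t)
  have hπ : Injective π := by
    rw [← LinearMap.ker_eq_bot, LinearMap.ker_eq_bot']
    rintro ⟨v, hv⟩ hπv
    exact Subtype.ext (Submodule.disjoint_def.1 (hW.disjoint_ker_proj hQ hQind hO hi) v hv
      (LinearMap.mem_ker.2 hπv))
  exact ⟨(LinearEquiv.ofInjective π hπ).trans (LinearEquiv.ofEq _ _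
    ((LinearMap.range_domRestrict _ _).trans (hW.map_proj_eq hQ hQind hij hi hj)))⟩

theorem ncard_orbit_le_of_one_lt (hW : IsIrreducibleProductDecomposition ρ W)
    (hQ : ∀ m t, Q (m • t) = (Q t).map (ρ m)) (hQind : iSupIndep Q) {t : κ}
    (hO : 1 < (orbit (∀ i, H i) t).ncard)
    (hI : 1 < {i | W i ≤ ⨆ u ∈ orbit (∀ i, H i) t, Q u}.ncard) :
    (orbit (∀ i, H i) t).ncard ≤ {i | W i ≤ ⨆ u ∈ orbit (∀ i, H i) t, Q u}.ncard := by
  obtain ⟨i₀, j₀, hi₀, hj₀, hij₀⟩ := (Set.one_lt_ncard_iff (Set.toFinite _)).1 hI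
  have hpartner : ∀ i, W i ≤ ⨆ u ∈ orbit (∀ i, H i) t, Q u →
      ∃ j, i ≠ j ∧ W j ≤ ⨆ u ∈ orbit (∀ i, H i) t, Q u := fun i _ ↦ by
    rcases eq_or_ne i i₀ with rfl | hi
    exacts [⟨j₀, hij₀, hj₀⟩, ⟨i₀, hi, hi₀⟩]
  have hequiv : ∀ u ∈ orbit (∀ i, H i) t, ∀ i,
      W i ≤ ⨆ u ∈ orbit (∀ i, H i) t, Q u → Nonempty (Q u ≃ₗ[F] W i) := by
    intro u hu i hi
    obtain ⟨j, hij, hj⟩ := hpartner i hi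
    rw [← orbit_eq_iff.2 hu] at hO hi hj
    exact hW.nonempty_linearEquiv hQ hQind hij hO hi hj
  have hfd : ∀ i, W i ≤ ⨆ u ∈ orbit (∀ i, H i) t, Q u → FiniteDimensional F (W i) := by
    intro i hi
    obtain ⟨j, hij, hj⟩ := hpartner i hi
    exact hW.finiteDimensional hQ hQind hij hO hi hj
  have := hfd i₀ hi₀
  obtain ⟨e₀⟩ := hequiv t (mem_orbit_self t) i₀ hi₀
  have hd : 0 < finrank F (W i₀) :=
    Module.finrank_pos_iff.2 (Submodule.nontrivial_iff_ne_bot.2 (hW.ne_bot i₀))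
  have hQsum : finrank F ↥(⨆ u ∈ orbit (∀ i, H i) t, Q u) =
      (orbit (∀ i, H i) t).ncard * finrank F (W i₀) := by
    refine hQind.finrank_biSup (Set.finite_of_ncard_pos (zero_lt_one.trans hO))
      (fun u hu ↦ ?_) fun u hu ↦ ?_ <;> obtain ⟨e⟩ := hequiv u hu i₀ hi₀
    exacts [Module.Finite.equiv e.symm, e.finrank_eq]
  have hWsum : finrank F ↥(⨆ i ∈ {i | W i ≤ ⨆ u ∈ orbit (∀ i, H i) t, Q u}, W i) =
      {i | W i ≤ ⨆ u ∈ orbit (∀ i, H i) t, Q u}.ncard * finrank F (W i₀) := by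
    refine hW.isInternal.submodule_iSupIndep.finrank_biSup (Set.toFinite _) hfd fun i hi ↦ ?_
    obtain ⟨e⟩ := hequiv t (mem_orbit_self t) i hi
    rw [← e.finrank_eq, e₀.finrank_eq]
  have hV := hW.eq_biSup_of_forall_map_le fun i g ↦ map_biSup_orbit_le hQ (Pi.mulSingle i g) t
  exact Nat.le_of_eq (Nat.eq_of_mul_eq_mul_right hd
    (hQsum.symm.trans ((congrArg (fun U : Submodule F V ↦ finrank F U) hV).trans hWsum)))

theorem ncard_orbit_le (hW : IsIrreducibleProductDecomposition ρ W)
    (hprim : ∀ i, ¬ IsImprimitive (ρ.comp (MonoidHom.mulSingle H i)) (W i))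
    (hQ : ∀ m t, Q (m • t) = (Q t).map (ρ m)) (hQind : iSupIndep Q) (hQne : ∀ t, Q t ≠ ⊥)
    (t : κ) :
    (orbit (∀ i, H i) t).ncard ≤ {i | W i ≤ ⨆ u ∈ orbit (∀ i, H i) t, Q u}.ncard := by
  have hV := hW.eq_biSup_of_forall_map_le fun i g ↦ map_biSup_orbit_le hQ (Pi.mulSingle i g) t
  have hI : {i | W i ≤ ⨆ u ∈ orbit (∀ i, H i) t, Q u}.Nonempty := by
    refine Set.nonempty_iff_ne_empty.2 fun h ↦ hQne t (eq_bot_iff.2 ?_)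
    rw [h, iSup_emptyset] at hV
    exact hV ▸ le_biSup Q (mem_orbit_self t)
  rcases le_or_gt (orbit (∀ i, H i) t).ncard 1 with hO | hO
  · exact hO.trans ((Set.ncard_pos (Set.toFinite _)).2 hI)
  rcases le_or_gt {i | W i ≤ ⨆ u ∈ orbit (∀ i, H i) t, Q u}.ncard 1 with hI₁ | hI₁
  · exfalso
    obtain ⟨i, hi⟩ :=
      Set.ncard_eq_one.1 (hI₁.antisymm ((Set.ncard_pos (Set.toFinite _)).2 hI))
    rw [hi, iSup_singleton, iSup_subtype'] at hV
    have := (Set.finite_of_ncard_pos (zero_lt_one.trans hO)).to_subtype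
    refine hprim i (isImprimitive_of_finite _ (X := orbit (∀ i, H i) t)
      (by rwa [Nat.card_coe_set_eq]) (fun u ↦ Q u) (fun u ↦ hQne u)
      (hQind.comp Subtype.val_injective) hV fun g u ↦ ?_)
    exact ⟨⟨Pi.mulSingle i g • u, mem_orbit_of_mem_orbit _ u.2⟩, hQ _ _⟩
  · exact hW.ncard_orbit_le_of_one_lt hQ hQind hO hI₁

theorem card_le_card [Finite κ] (hW : IsIrreducibleProductDecomposition ρ W)
    (hprim : ∀ i, ¬ IsImprimitive (ρ.comp (MonoidHom.mulSingle H i)) (W i))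
    (hQ : ∀ m t, Q (m • t) = (Q t).map (ρ m)) (hQind : iSupIndep Q)
    (hQne : ∀ t, Q t ≠ ⊥) : Nat.card κ ≤ Nat.card ι := by
  refine card_le_card_of_ncard_orbit_le (G := ∀ i, H i) (fun S ↦ {i | W i ≤ ⨆ u ∈ S, Q u})
    (fun a b hb ↦ ?_) (hW.ncard_orbit_le hprim hQ hQind hQne)
  have horbit : Disjoint (orbit (∀ i, H i) a) (orbit (∀ i, H i) b) :=
    Set.disjoint_left.2 fun x hxa hxb ↦
      hb (orbit_eq_iff.1 ((orbit_eq_iff.2 hxb).symm.trans (orbit_eq_iff.2 hxa)))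
  exact Set.disjoint_left.2 fun i hia hib ↦
    hW.ne_bot i (le_bot_iff.1 (hQind.disjoint_biSup_biSup horbit hia hib))

end IsIrreducibleProductDecomposition

end Representation

/-- Lemma on direct products: `M = H₁ × ⋯ × H_k` acts on `V = W₁ ⊕ ⋯ ⊕ W_k` via a
representation `ρ`, with each `W_i` a nontrivial irreducible primitive `F[H_i]`-module on
which the factors `H_j` (`j ≠ i`) act trivially.  If `V = Q₁ ⊕ ⋯ ⊕ Q_ℓ` with the nonzero
subspaces `Q_t` permuted by `M`, then `ℓ ≤ k`. -/
theorem directProduct_soi_length_le (F : Type*) [Field F] (k : ℕ)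
    (H : Fin k → Type*) [∀ i, Group (H i)]
    (V : Type*) [AddCommGroup V] [Module F V]
    (ρ : Representation F (∀ i, H i) V)
    (W : Fin k → Submodule F V)
    (hint : DirectSum.IsInternal W)
    -- each `W i` is an `F[H i]`-submodule:
    (hinv : ∀ i (g : H i), (W i).map (ρ (Pi.mulSingle i g)) ≤ W i)
    -- (iii) the factors `H j`, `j ≠ i`, act trivially on `W i`:
    (htriv : ∀ i j, j ≠ i → ∀ (g : H j), ∀ v ∈ W i, ρ (Pi.mulSingle j g) v = v)
    -- (i) `W i` is a nontrivial irreducible `F[H i]`-module: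
    (hnontriv : ∀ i, ∃ (g : H i), ∃ v ∈ W i, ρ (Pi.mulSingle i g) v ≠ v)
    (hirr : ∀ i (U : Submodule F V), U ≤ W i →
      (∀ g : H i, U.map (ρ (Pi.mulSingle i g)) ≤ U) → U = ⊥ ∨ U = W i)
    -- (ii) the action of `H i` on `W i` is primitive:
    (hprim : ∀ i, ¬ ∃ (m : ℕ) (P : Fin m → Submodule F V), 1 < m ∧
      (∀ t, P t ≠ ⊥) ∧ iSupIndep P ∧ (⨆ t, P t) = W i ∧
      (∀ g : H i, ∀ t, (P t).map (ρ (Pi.mulSingle i g)) ∈ Set.range P))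
    (ℓ : ℕ) (Q : Fin ℓ → Submodule F V)
    (hQint : DirectSum.IsInternal Q) (hQne : ∀ t, Q t ≠ ⊥)
    (hQperm : ∀ (m : ∀ i, H i) (t : Fin ℓ), (Q t).map (ρ m) ∈ Set.range Q) :
    ℓ ≤ k := by
  have hW : ρ.IsIrreducibleProductDecomposition W := ⟨⟨hint, hinv, htriv⟩, hirr, hnontriv⟩
  have hQind := hQint.submodule_iSupIndep
  let _ := Representation.indexMulAction ρ (hQind.injective hQne) hQperm
  simpa using hW.card_le_card hprim (fun m t ↦ (hQperm m t).choose_spec) hQind hQne
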